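/- (Unconditional pathwise bound.) Let X ∈ ℝ^{n×d}, W_Q, W_K ∈ ℝ^{d×d_k}, E ∈ ℝ^{n×n}, let P ∈ ℝ^{d×d} be an orthogonal projector, set X_P = X P, G_Q = Xᵀ E X W_K / √d_k, G_K = Xᵀ Eᵀ X W_Q / √d_k, and for step sizes η_Q, η_K ≥ 0 define W_Q⁺ = W_Q − η_Q G_Q, W_K⁺ = W_K − η_K G_K, B = W_Q W_Kᵀ, B⁺ = W_Q⁺(W_K⁺)ᵀ, and ΔZ_P = X_P P(B⁺ − B)P X_Pᵀ / √d_k. Then, with no structural assumption on P beyond being an orthogonal projector, ‖ΔZ_P‖_F ≤ (‖E‖_op · ‖X‖_F / d_k) · (η_Q · ‖W_K‖_op² + η_K · ‖W_Q‖_op²) · ‖X_P‖_op² · ‖X_P‖_F + η_Q η_K · ‖X_P‖_op² · ‖X_P‖_F² · ‖E‖_op² · ‖X W_K‖_F · ‖X W_Q‖_F / d_k^{3/2}. -/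

import Mathlib

open Matrix

/-- Frobenius norm of a real matrix. -/
noncomputable def frobNorm {a b : ℕ} (A : Matrix (Fin a) (Fin b) ℝ) : ℝ :=
  Real.sqrt (∑ i, ∑ j, (A i j) ^ 2)

/-- ℓ²→ℓ² operator norm of a real matrix. -/
noncomputable def opNorm {a b : ℕ} (A : Matrix (Fin a) (Fin b) ℝ) : ℝ :=
  ‖(Matrix.toEuclideanLin A).toContinuousLinearMap‖

/-- Gradient of the attention logits `Z = X W_Q W_Kᵀ Xᵀ / √d_k` with respect to `W_Q`:
`G_Q = Xᵀ E X W_K / √d_k`. -/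
noncomputable def gradQ {n d dk : ℕ} (X : Matrix (Fin n) (Fin d) ℝ)
    (E : Matrix (Fin n) (Fin n) ℝ) (WK : Matrix (Fin d) (Fin dk) ℝ) :
    Matrix (Fin d) (Fin dk) ℝ :=
  (Real.sqrt (dk : ℝ))⁻¹ • (Xᵀ * E * X * WK)

/-- Gradient of the attention logits with respect to `W_K`: `G_K = Xᵀ Eᵀ X W_Q / √d_k`. -/
noncomputable def gradK {n d dk : ℕ} (X : Matrix (Fin n) (Fin d) ℝ)
    (E : Matrix (Fin n) (Fin n) ℝ) (WQ : Matrix (Fin d) (Fin dk) ℝ) :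
    Matrix (Fin d) (Fin dk) ℝ :=
  (Real.sqrt (dk : ℝ))⁻¹ • (Xᵀ * Eᵀ * X * WQ)

/-- One-step change of the immature logit component
`ΔZ_P = X_P P (B⁺ − B) P X_Pᵀ / √d_k`, where `X_P = X P`, `B = W_Q W_Kᵀ`,
`B⁺ = (W_Q − η_Q G_Q)(W_K − η_K G_K)ᵀ`. -/
noncomputable def deltaZP {n d dk : ℕ} (X : Matrix (Fin n) (Fin d) ℝ)
    (E : Matrix (Fin n) (Fin n) ℝ) (WQ WK : Matrix (Fin d) (Fin dk) ℝ)
    (P : Matrix (Fin d) (Fin d) ℝ) (ηQ ηK : ℝ) :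
    Matrix (Fin n) (Fin n) ℝ :=
  (Real.sqrt (dk : ℝ))⁻¹ •
    ((X * P) *
      (P * ((WQ - ηQ • gradQ X E WK) * (WK - ηK • gradK X E WQ)ᵀ - WQ * WKᵀ) * P) *
      (X * P)ᵀ)

/-! ### Auxiliary norm lemmas -/

section OpSec
open scoped Matrix.Norms.L2Operator

lemma opNorm_eq {a b : ℕ} (A : Matrix (Fin a) (Fin b) ℝ) : opNorm A = ‖A‖ := rfl

lemma opNorm_nonneg' {a b : ℕ} (A : Matrix (Fin a) (Fin b) ℝ) : 0 ≤ opNorm A :=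
  norm_nonneg _

lemma opNorm_mul_le' {a b c : ℕ} (A : Matrix (Fin a) (Fin b) ℝ) (B : Matrix (Fin b) (Fin c) ℝ) :
    opNorm (A * B) ≤ opNorm A * opNorm B := by
  simpa [opNorm_eq] using Matrix.l2_opNorm_mul A B

lemma opNorm_transpose' {a b : ℕ} (A : Matrix (Fin a) (Fin b) ℝ) : opNorm Aᵀ = opNorm A := by
  have h : Aᴴ = Aᵀ := by ext i j; simp [conjTranspose_apply]
  rw [opNorm_eq, opNorm_eq, ← h, Matrix.l2_opNorm_conjTranspose]

lemma opNorm_proj_le_one {a : ℕ} (P : Matrix (Fin a) (Fin a) ℝ) (hP1 : Pᵀ = P)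
    (hP2 : P * P = P) : opNorm P ≤ 1 := by
  have h : Pᴴ = Pᵀ := by ext i j; simp [conjTranspose_apply]
  have h2 := Matrix.l2_opNorm_conjTranspose_mul_self P
  rw [h, hP1, hP2] at h2
  have h3 : (0:ℝ) ≤ ‖P‖ := norm_nonneg _
  rw [opNorm_eq]
  nlinarith [h2, h3]

end OpSec

section FrobSec
attribute [local instance] Matrix.frobeniusNormedAddCommGroup Matrix.frobeniusNormedSpace

lemma frobNorm_eq {a b : ℕ} (A : Matrix (Fin a) (Fin b) ℝ) : frobNorm A = ‖A‖ := by
  rw [frobNorm, Matrix.frobenius_norm_def, Real.sqrt_eq_rpow]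
  congr 1
  refine Finset.sum_congr rfl fun i _ => Finset.sum_congr rfl fun j _ => ?_
  rw [Real.rpow_two, Real.norm_eq_abs, sq_abs]

lemma frobNorm_nonneg' {a b : ℕ} (A : Matrix (Fin a) (Fin b) ℝ) : 0 ≤ frobNorm A :=
  Real.sqrt_nonneg _

lemma frobNorm_transpose' {a b : ℕ} (A : Matrix (Fin a) (Fin b) ℝ) : frobNorm Aᵀ = frobNorm A := by
  rw [frobNorm_eq, frobNorm_eq, Matrix.frobenius_norm_transpose]

lemma frobNorm_smul' {a b : ℕ} (c : ℝ) (A : Matrix (Fin a) (Fin b) ℝ) :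
    frobNorm (c • A) = |c| * frobNorm A := by
  rw [frobNorm_eq, frobNorm_eq, norm_smul, Real.norm_eq_abs]

lemma frobNorm_add_le' {a b : ℕ} (A B : Matrix (Fin a) (Fin b) ℝ) :
    frobNorm (A + B) ≤ frobNorm A + frobNorm B := by
  rw [frobNorm_eq, frobNorm_eq, frobNorm_eq]; exact norm_add_le _ _

lemma frobNorm_mul_le' {a b c : ℕ} (A : Matrix (Fin a) (Fin b) ℝ) (B : Matrix (Fin b) (Fin c) ℝ) :
    frobNorm (A * B) ≤ frobNorm A * frobNorm B := by
  rw [frobNorm_eq, frobNorm_eq, frobNorm_eq]; exact Matrix.frobenius_norm_mul A B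

end FrobSec

lemma frob_sq {a b : ℕ} (A : Matrix (Fin a) (Fin b) ℝ) :
    frobNorm A ^ 2 = ∑ i, ∑ j, (A i j) ^ 2 := by
  rw [frobNorm, Real.sq_sqrt]
  positivity

lemma euclid_norm_sq {a : ℕ} (v : Fin a → ℝ) :
    ‖(WithLp.equiv 2 (Fin a → ℝ)).symm v‖ ^ 2 = ∑ i, (v i) ^ 2 := by
  rw [EuclideanSpace.norm_eq, Real.sq_sqrt (by positivity)]
  refine Finset.sum_congr rfl fun i _ => ?_
  simp [Real.norm_eq_abs, sq_abs]

lemma frobNorm_mul_le_op_left {a b c : ℕ} (A : Matrix (Fin a) (Fin b) ℝ)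
    (B : Matrix (Fin b) (Fin c) ℝ) : frobNorm (A * B) ≤ opNorm A * frobNorm B := by
  have key : frobNorm (A * B) ^ 2 ≤ (opNorm A * frobNorm B) ^ 2 := by
    have l1 : (∑ i, ∑ j, ((A*B) i j)^2) = ∑ j, ∑ i, ((A*B) i j)^2 := Finset.sum_comm
    have l2 : (∑ k, ∑ j, (B k j)^2) = ∑ j, ∑ k, (B k j)^2 := Finset.sum_comm
    rw [frob_sq, l1, mul_pow, frob_sq, l2, Finset.mul_sum]
    refine Finset.sum_le_sum fun j _ => ?_
    have hv := (Matrix.toEuclideanLin A).toContinuousLinearMap.le_opNorm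
      ((WithLp.equiv 2 (Fin b → ℝ)).symm (fun k => B k j))
    have happ : (Matrix.toEuclideanLin A).toContinuousLinearMap
        ((WithLp.equiv 2 (Fin b → ℝ)).symm (fun k => B k j))
        = (WithLp.equiv 2 (Fin a → ℝ)).symm (A *ᵥ fun k => B k j) := by
      simp [Matrix.toEuclideanLin_apply_piLp_toLp]
    rw [happ] at hv
    have h2 : ‖(WithLp.equiv 2 (Fin a → ℝ)).symm (A *ᵥ fun k => B k j)‖ ^ 2
        ≤ (opNorm A * ‖(WithLp.equiv 2 (Fin b → ℝ)).symm (fun k => B k j)‖) ^ 2 := by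
      have := norm_nonneg ((WithLp.equiv 2 (Fin a → ℝ)).symm (A *ᵥ fun k => B k j))
      exact pow_le_pow_left₀ this hv 2
    rw [euclid_norm_sq, mul_pow, euclid_norm_sq] at h2
    calc ∑ i, ((A * B) i j) ^ 2 = ∑ i, ((A *ᵥ fun k => B k j) i) ^ 2 := by
          refine Finset.sum_congr rfl fun i _ => ?_
          simp [Matrix.mul_apply, Matrix.mulVec, dotProduct]
      _ ≤ opNorm A ^ 2 * ∑ k, (B k j) ^ 2 := h2
  have h1 := frobNorm_nonneg' (A * B)
  have h2 : 0 ≤ opNorm A * frobNorm B :=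
    mul_nonneg (opNorm_nonneg' A) (frobNorm_nonneg' B)
  nlinarith [key]

lemma frobNorm_mul_le_op_right {a b c : ℕ} (A : Matrix (Fin a) (Fin b) ℝ)
    (B : Matrix (Fin b) (Fin c) ℝ) : frobNorm (A * B) ≤ frobNorm A * opNorm B := by
  calc frobNorm (A * B) = frobNorm ((A * B)ᵀ) := (frobNorm_transpose' _).symm
    _ = frobNorm (Bᵀ * Aᵀ) := by rw [Matrix.transpose_mul]
    _ ≤ opNorm Bᵀ * frobNorm Aᵀ := frobNorm_mul_le_op_left _ _
    _ = frobNorm A * opNorm B := by rw [opNorm_transpose', frobNorm_transpose']; ring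

lemma opNorm_le_frobNorm' {a b : ℕ} (A : Matrix (Fin a) (Fin b) ℝ) :
    opNorm A ≤ frobNorm A := by
  refine ContinuousLinearMap.opNorm_le_bound _ (frobNorm_nonneg' A) fun v => ?_
  have happ : (Matrix.toEuclideanLin A).toContinuousLinearMap v
      = (WithLp.equiv 2 (Fin a → ℝ)).symm (A *ᵥ (WithLp.equiv 2 (Fin b → ℝ)) v) := by
    simp [Matrix.toEuclideanLin_apply]
  rw [happ]
  set w : Fin b → ℝ := (WithLp.equiv 2 (Fin b → ℝ)) v with hw
  have hvw : ‖v‖ = ‖(WithLp.equiv 2 (Fin b → ℝ)).symm w‖ := by simp [hw]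
  rw [hvw]
  have hsq : ‖(WithLp.equiv 2 (Fin a → ℝ)).symm (A *ᵥ w)‖ ^ 2
      ≤ (frobNorm A * ‖(WithLp.equiv 2 (Fin b → ℝ)).symm w‖) ^ 2 := by
    rw [euclid_norm_sq, mul_pow, euclid_norm_sq, frob_sq, Finset.sum_mul]
    refine Finset.sum_le_sum fun i _ => ?_
    have hcs := Finset.sum_mul_sq_le_sq_mul_sq Finset.univ (fun k => A i k) w
    have hmv : (A *ᵥ w) i = ∑ k, A i k * w k := by
      simp [Matrix.mulVec, dotProduct]
    rw [hmv]
    exact hcs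
  have h1 := norm_nonneg ((WithLp.equiv 2 (Fin a → ℝ)).symm (A *ᵥ w))
  have h2 : 0 ≤ frobNorm A * ‖(WithLp.equiv 2 (Fin b → ℝ)).symm w‖ :=
    mul_nonneg (frobNorm_nonneg' A) (norm_nonneg _)
  nlinarith [hsq]

/-! ### Structural lemmas -/

lemma deltaZP_decomp {n d dk : ℕ} (X : Matrix (Fin n) (Fin d) ℝ)
    (E : Matrix (Fin n) (Fin n) ℝ) (WQ WK : Matrix (Fin d) (Fin dk) ℝ)
    (P : Matrix (Fin d) (Fin d) ℝ) (ηQ ηK : ℝ) :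
    deltaZP X E WQ WK P ηQ ηK =
      (-(ηQ * ((Real.sqrt (dk : ℝ))⁻¹ * (Real.sqrt (dk : ℝ))⁻¹))) •
        ((X * P) * (P * (Xᵀ * E * X * WK * WKᵀ) * P) * (X * P)ᵀ)
      + (-(ηK * ((Real.sqrt (dk : ℝ))⁻¹ * (Real.sqrt (dk : ℝ))⁻¹))) •
        ((X * P) * (P * (WQ * (WQᵀ * (Xᵀ * (E * X)))) * P) * (X * P)ᵀ)
      + (ηQ * ηK * ((Real.sqrt (dk : ℝ))⁻¹ * ((Real.sqrt (dk : ℝ))⁻¹ * (Real.sqrt (dk : ℝ))⁻¹))) •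
        ((X * P) * (P * (Xᵀ * E * X * WK * (WQᵀ * (Xᵀ * (E * X)))) * P) * (X * P)ᵀ) := by
  have hGK : (gradK X E WQ)ᵀ = (Real.sqrt (dk : ℝ))⁻¹ • (WQᵀ * (Xᵀ * (E * X))) := by
    simp [gradK, Matrix.transpose_smul, Matrix.transpose_mul, Matrix.mul_assoc]
  rw [deltaZP]
  simp only [Matrix.transpose_sub, Matrix.transpose_smul, hGK, gradQ]
  simp only [Matrix.sub_mul, Matrix.mul_sub, smul_mul_assoc, mul_smul_comm,
    Matrix.smul_mul, Matrix.mul_smul, smul_smul, Matrix.add_mul, Matrix.mul_add,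
    Matrix.sub_mul, sub_eq_add_neg, Matrix.neg_mul, Matrix.mul_neg, smul_add, smul_neg,
    smul_sub, Matrix.mul_assoc]
  module

lemma sandwich_bound {n d : ℕ} (A : Matrix (Fin n) (Fin d) ℝ) (M : Matrix (Fin d) (Fin d) ℝ) :
    frobNorm (A * M * Aᵀ) ≤ opNorm A * frobNorm M * opNorm A := by
  calc frobNorm (A * M * Aᵀ) ≤ frobNorm (A * M) * opNorm Aᵀ := frobNorm_mul_le_op_right _ _
    _ ≤ (opNorm A * frobNorm M) * opNorm Aᵀ :=
        mul_le_mul_of_nonneg_right (frobNorm_mul_le_op_left A M) (opNorm_nonneg' _)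
    _ = opNorm A * frobNorm M * opNorm A := by rw [opNorm_transpose']

lemma core_bound {n d dk : ℕ} (X : Matrix (Fin n) (Fin d) ℝ) (E : Matrix (Fin n) (Fin n) ℝ)
    (W : Matrix (Fin d) (Fin dk) ℝ) (P : Matrix (Fin d) (Fin d) ℝ)
    (hP1 : Pᵀ = P) (hPop : opNorm P ≤ 1) :
    frobNorm (P * (Xᵀ * E * X * W * Wᵀ) * P)
      ≤ opNorm (X * P) * opNorm E * frobNorm X * opNorm W ^ 2 := by
  have hre : P * (Xᵀ * E * X * W * Wᵀ) * P = (P * Xᵀ * E) * (X * (W * (Wᵀ * P))) := by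
    simp only [Matrix.mul_assoc]
  have hPXT : P * Xᵀ = (X * P)ᵀ := by rw [Matrix.transpose_mul, hP1]
  rw [hre]
  have h2 : opNorm (P * Xᵀ * E) ≤ opNorm (X * P) * opNorm E := by
    calc opNorm (P * Xᵀ * E) ≤ opNorm (P * Xᵀ) * opNorm E := opNorm_mul_le' _ _
      _ = opNorm (X * P) * opNorm E := by rw [hPXT, opNorm_transpose']
  have h3 : frobNorm (X * (W * (Wᵀ * P))) ≤ frobNorm X * opNorm W ^ 2 := by
    have a1 : opNorm (W * (Wᵀ * P)) ≤ opNorm W * (opNorm Wᵀ * opNorm P) :=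
      le_trans (opNorm_mul_le' _ _)
        (mul_le_mul_of_nonneg_left (opNorm_mul_le' _ _) (opNorm_nonneg' _))
    have a2 : opNorm (W * (Wᵀ * P)) ≤ opNorm W ^ 2 := by
      rw [opNorm_transpose'] at a1
      nlinarith [opNorm_nonneg' W, opNorm_nonneg' P]
    calc frobNorm (X * (W * (Wᵀ * P))) ≤ frobNorm X * opNorm (W * (Wᵀ * P)) :=
          frobNorm_mul_le_op_right _ _
      _ ≤ frobNorm X * opNorm W ^ 2 := mul_le_mul_of_nonneg_left a2 (frobNorm_nonneg' X)
  calc frobNorm ((P * Xᵀ * E) * (X * (W * (Wᵀ * P))))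
      ≤ opNorm (P * Xᵀ * E) * frobNorm (X * (W * (Wᵀ * P))) := frobNorm_mul_le_op_left _ _
    _ ≤ (opNorm (X * P) * opNorm E) * (frobNorm X * opNorm W ^ 2) :=
        mul_le_mul h2 h3 (frobNorm_nonneg' _)
          (mul_nonneg (opNorm_nonneg' _) (opNorm_nonneg' _))
    _ = opNorm (X * P) * opNorm E * frobNorm X * opNorm W ^ 2 := by ring

lemma core3_bound {n d dk : ℕ} (X : Matrix (Fin n) (Fin d) ℝ) (E : Matrix (Fin n) (Fin n) ℝ)
    (WQ WK : Matrix (Fin d) (Fin dk) ℝ) (P : Matrix (Fin d) (Fin d) ℝ)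
    (hP1 : Pᵀ = P) :
    frobNorm (P * (Xᵀ * E * X * WK * (WQᵀ * (Xᵀ * (E * X)))) * P)
      ≤ opNorm (X * P) ^ 2 * opNorm E ^ 2 * frobNorm (X * WK) * frobNorm (X * WQ) := by
  have hre : P * (Xᵀ * E * X * WK * (WQᵀ * (Xᵀ * (E * X)))) * P
      = (P * Xᵀ * E) * ((X * WK) * ((WQᵀ * Xᵀ) * (E * (X * P)))) := by
    simp only [Matrix.mul_assoc]
  have hPXT : P * Xᵀ = (X * P)ᵀ := by rw [Matrix.transpose_mul, hP1]
  rw [hre]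
  have h2 : opNorm (P * Xᵀ * E) ≤ opNorm (X * P) * opNorm E := by
    calc opNorm (P * Xᵀ * E) ≤ opNorm (P * Xᵀ) * opNorm E := opNorm_mul_le' _ _
      _ = opNorm (X * P) * opNorm E := by rw [hPXT, opNorm_transpose']
  have h4 : frobNorm ((WQᵀ * Xᵀ) * (E * (X * P)))
      ≤ frobNorm (X * WQ) * (opNorm E * opNorm (X * P)) := by
    have e1 : WQᵀ * Xᵀ = (X * WQ)ᵀ := (Matrix.transpose_mul X WQ).symm
    calc frobNorm ((WQᵀ * Xᵀ) * (E * (X * P)))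
        ≤ frobNorm (WQᵀ * Xᵀ) * opNorm (E * (X * P)) := frobNorm_mul_le_op_right _ _
      _ ≤ frobNorm (X * WQ) * (opNorm E * opNorm (X * P)) := by
          rw [e1, frobNorm_transpose']
          exact mul_le_mul_of_nonneg_left (opNorm_mul_le' _ _) (frobNorm_nonneg' _)
  have h3 : frobNorm ((X * WK) * ((WQᵀ * Xᵀ) * (E * (X * P))))
      ≤ frobNorm (X * WK) * (frobNorm (X * WQ) * (opNorm E * opNorm (X * P))) := by
    calc frobNorm ((X * WK) * ((WQᵀ * Xᵀ) * (E * (X * P))))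
        ≤ frobNorm (X * WK) * frobNorm ((WQᵀ * Xᵀ) * (E * (X * P))) := frobNorm_mul_le' _ _
      _ ≤ frobNorm (X * WK) * (frobNorm (X * WQ) * (opNorm E * opNorm (X * P))) :=
          mul_le_mul_of_nonneg_left h4 (frobNorm_nonneg' _)
  calc frobNorm ((P * Xᵀ * E) * ((X * WK) * ((WQᵀ * Xᵀ) * (E * (X * P)))))
      ≤ opNorm (P * Xᵀ * E) * frobNorm ((X * WK) * ((WQᵀ * Xᵀ) * (E * (X * P)))) :=
        frobNorm_mul_le_op_left _ _
    _ ≤ (opNorm (X * P) * opNorm E) *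
          (frobNorm (X * WK) * (frobNorm (X * WQ) * (opNorm E * opNorm (X * P)))) :=
        mul_le_mul h2 h3 (frobNorm_nonneg' _)
          (mul_nonneg (opNorm_nonneg' _) (opNorm_nonneg' _))
    _ = opNorm (X * P) ^ 2 * opNorm E ^ 2 * frobNorm (X * WK) * frobNorm (X * WQ) := by ring

/-- Unconditional pathwise bound. -/
theorem unconditional_pathwise_bound
    (n d dk : ℕ) (hdk : 0 < dk)
    (X : Matrix (Fin n) (Fin d) ℝ)
    (WQ WK : Matrix (Fin d) (Fin dk) ℝ)
    (E : Matrix (Fin n) (Fin n) ℝ)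
    (P : Matrix (Fin d) (Fin d) ℝ)
    (hP1 : Pᵀ = P) (hP2 : P * P = P)
    (ηQ ηK : ℝ) (hηQ : 0 ≤ ηQ) (hηK : 0 ≤ ηK) :
    frobNorm (deltaZP X E WQ WK P ηQ ηK)
      ≤ opNorm E * frobNorm X / (dk : ℝ) *
          (ηQ * opNorm WK ^ 2 + ηK * opNorm WQ ^ 2) *
          opNorm (X * P) ^ 2 * frobNorm (X * P)
        + ηQ * ηK * opNorm (X * P) ^ 2 * frobNorm (X * P) ^ 2 * opNorm E ^ 2 *
            frobNorm (X * WK) * frobNorm (X * WQ) / ((dk : ℝ) ^ ((3 : ℝ) / 2)) := by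
  set s : ℝ := (Real.sqrt (dk : ℝ))⁻¹ with hs_def
  have hdk0 : (0:ℝ) < (dk : ℝ) := by exact_mod_cast hdk
  have hs : 0 ≤ s := inv_nonneg.2 (Real.sqrt_nonneg _)
  have hs2 : s * s = ((dk : ℝ))⁻¹ := by
    rw [hs_def, ← mul_inv, Real.mul_self_sqrt hdk0.le]
  have hs3 : s * (s * s) = (((dk : ℝ)) ^ ((3 : ℝ) / 2))⁻¹ := by
    have h32 : ((dk : ℝ)) ^ ((3 : ℝ) / 2) = Real.sqrt (dk : ℝ) ^ (3 : ℕ) := by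
      rw [Real.sqrt_eq_rpow, ← Real.rpow_natCast (((dk : ℝ)) ^ ((1:ℝ)/2)) 3,
        ← Real.rpow_mul hdk0.le]
      norm_num
    rw [h32, hs_def]
    ring
  have hPop : opNorm P ≤ 1 := opNorm_proj_le_one P hP1 hP2
  have hXPle : opNorm (X * P) ≤ frobNorm (X * P) := opNorm_le_frobNorm' _
  set M1 := (X * P) * (P * (Xᵀ * E * X * WK * WKᵀ) * P) * (X * P)ᵀ with hM1_def
  set M2 := (X * P) * (P * (WQ * (WQᵀ * (Xᵀ * (E * X)))) * P) * (X * P)ᵀ with hM2_def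
  set M3 := (X * P) * (P * (Xᵀ * E * X * WK * (WQᵀ * (Xᵀ * (E * X)))) * P) * (X * P)ᵀ
    with hM3_def
  -- abbreviations
  set oE := opNorm E
  set fX := frobNorm X
  set oK := opNorm WK
  set oQ := opNorm WQ
  set oXP := opNorm (X * P)
  set fXP := frobNorm (X * P)
  set fK := frobNorm (X * WK)
  set fQ := frobNorm (X * WQ)
  have hoE : 0 ≤ oE := opNorm_nonneg' _
  have hfX : 0 ≤ fX := frobNorm_nonneg' _
  have hoK : 0 ≤ oK := opNorm_nonneg' _
  have hoQ : 0 ≤ oQ := opNorm_nonneg' _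
  have hoXP : 0 ≤ oXP := opNorm_nonneg' _
  have hfXP : 0 ≤ fXP := frobNorm_nonneg' _
  have hfK : 0 ≤ fK := frobNorm_nonneg' _
  have hfQ : 0 ≤ fQ := frobNorm_nonneg' _
  -- bounds for the three pieces
  have hB1 : frobNorm M1 ≤ oXP ^ 2 * (fXP * oE * fX * oK ^ 2) := by
    have b1 : frobNorm M1 ≤ oXP * frobNorm (P * (Xᵀ * E * X * WK * WKᵀ) * P) * oXP :=
      sandwich_bound _ _
    have c1 : frobNorm (P * (Xᵀ * E * X * WK * WKᵀ) * P) ≤ oXP * oE * fX * oK ^ 2 :=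
      core_bound X E WK P hP1 hPop
    have nn : 0 ≤ oXP ^ 2 * (oE * fX * oK ^ 2) :=
      mul_nonneg (sq_nonneg _) (mul_nonneg (mul_nonneg hoE hfX) (sq_nonneg _))
    calc frobNorm M1 ≤ oXP * (oXP * oE * fX * oK ^ 2) * oXP :=
          le_trans b1 (mul_le_mul_of_nonneg_right
            (mul_le_mul_of_nonneg_left c1 hoXP) hoXP)
      _ = (oXP ^ 2 * (oE * fX * oK ^ 2)) * oXP := by ring
      _ ≤ (oXP ^ 2 * (oE * fX * oK ^ 2)) * fXP := mul_le_mul_of_nonneg_left hXPle nn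
      _ = oXP ^ 2 * (fXP * oE * fX * oK ^ 2) := by ring
  have hB2 : frobNorm M2 ≤ oXP ^ 2 * (fXP * oE * fX * oQ ^ 2) := by
    have etr : (P * (WQ * (WQᵀ * (Xᵀ * (E * X)))) * P)ᵀ
        = P * (Xᵀ * Eᵀ * X * WQ * WQᵀ) * P := by
      simp [Matrix.transpose_mul, Matrix.transpose_transpose, hP1, Matrix.mul_assoc]
    have eq1 : frobNorm (P * (WQ * (WQᵀ * (Xᵀ * (E * X)))) * P)
        = frobNorm (P * (Xᵀ * Eᵀ * X * WQ * WQᵀ) * P) := by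
      rw [← frobNorm_transpose' (P * (WQ * (WQᵀ * (Xᵀ * (E * X)))) * P), etr]
    have b1 : frobNorm M2 ≤ oXP * frobNorm (P * (WQ * (WQᵀ * (Xᵀ * (E * X)))) * P) * oXP :=
      sandwich_bound _ _
    have c1 : frobNorm (P * (Xᵀ * Eᵀ * X * WQ * WQᵀ) * P)
        ≤ oXP * opNorm Eᵀ * fX * oQ ^ 2 := core_bound X Eᵀ WQ P hP1 hPop
    rw [opNorm_transpose'] at c1
    rw [eq1] at b1
    have nn : 0 ≤ oXP ^ 2 * (oE * fX * oQ ^ 2) :=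
      mul_nonneg (sq_nonneg _) (mul_nonneg (mul_nonneg hoE hfX) (sq_nonneg _))
    calc frobNorm M2 ≤ oXP * (oXP * oE * fX * oQ ^ 2) * oXP :=
          le_trans b1 (mul_le_mul_of_nonneg_right
            (mul_le_mul_of_nonneg_left c1 hoXP) hoXP)
      _ = (oXP ^ 2 * (oE * fX * oQ ^ 2)) * oXP := by ring
      _ ≤ (oXP ^ 2 * (oE * fX * oQ ^ 2)) * fXP := mul_le_mul_of_nonneg_left hXPle nn
      _ = oXP ^ 2 * (fXP * oE * fX * oQ ^ 2) := by ring
  have hB3 : frobNorm M3 ≤ oXP ^ 2 * (fXP ^ 2 * oE ^ 2 * fK * fQ) := by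
    have b1 : frobNorm M3
        ≤ oXP * frobNorm (P * (Xᵀ * E * X * WK * (WQᵀ * (Xᵀ * (E * X)))) * P) * oXP :=
      sandwich_bound _ _
    have c1 : frobNorm (P * (Xᵀ * E * X * WK * (WQᵀ * (Xᵀ * (E * X)))) * P)
        ≤ oXP ^ 2 * oE ^ 2 * fK * fQ := core3_bound X E WQ WK P hP1
    have nn : 0 ≤ oXP ^ 2 * (oE ^ 2 * fK * fQ) :=
      mul_nonneg (sq_nonneg _) (mul_nonneg (mul_nonneg (sq_nonneg _) hfK) hfQ)
    have hsqle : oXP ^ 2 ≤ fXP ^ 2 := pow_le_pow_left₀ hoXP hXPle 2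
    calc frobNorm M3 ≤ oXP * (oXP ^ 2 * oE ^ 2 * fK * fQ) * oXP :=
          le_trans b1 (mul_le_mul_of_nonneg_right
            (mul_le_mul_of_nonneg_left c1 hoXP) hoXP)
      _ = (oXP ^ 2 * (oE ^ 2 * fK * fQ)) * oXP ^ 2 := by ring
      _ ≤ (oXP ^ 2 * (oE ^ 2 * fK * fQ)) * fXP ^ 2 := mul_le_mul_of_nonneg_left hsqle nn
      _ = oXP ^ 2 * (fXP ^ 2 * oE ^ 2 * fK * fQ) := by ring
  -- triangle inequality
  have tri : frobNorm (deltaZP X E WQ WK P ηQ ηK)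
      ≤ ηQ * (s * s) * frobNorm M1 + ηK * (s * s) * frobNorm M2
        + ηQ * ηK * (s * (s * s)) * frobNorm M3 := by
    rw [deltaZP_decomp]
    calc frobNorm ((-(ηQ * (s * s))) • M1 + (-(ηK * (s * s))) • M2
          + (ηQ * ηK * (s * (s * s))) • M3)
        ≤ frobNorm ((-(ηQ * (s * s))) • M1 + (-(ηK * (s * s))) • M2)
            + frobNorm ((ηQ * ηK * (s * (s * s))) • M3) := frobNorm_add_le' _ _
      _ ≤ (frobNorm ((-(ηQ * (s * s))) • M1) + frobNorm ((-(ηK * (s * s))) • M2))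
            + frobNorm ((ηQ * ηK * (s * (s * s))) • M3) :=
          add_le_add (frobNorm_add_le' _ _) le_rfl
      _ = ηQ * (s * s) * frobNorm M1 + ηK * (s * s) * frobNorm M2
            + ηQ * ηK * (s * (s * s)) * frobNorm M3 := by
          rw [frobNorm_smul', frobNorm_smul', frobNorm_smul', abs_neg, abs_neg,
            abs_of_nonneg (mul_nonneg hηQ (mul_nonneg hs hs)),
            abs_of_nonneg (mul_nonneg hηK (mul_nonneg hs hs)),
            abs_of_nonneg (mul_nonneg (mul_nonneg hηQ hηK) (mul_nonneg hs (mul_nonneg hs hs)))]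
  have c1nn : 0 ≤ ηQ * (s * s) := mul_nonneg hηQ (mul_nonneg hs hs)
  have c2nn : 0 ≤ ηK * (s * s) := mul_nonneg hηK (mul_nonneg hs hs)
  have c3nn : 0 ≤ ηQ * ηK * (s * (s * s)) :=
    mul_nonneg (mul_nonneg hηQ hηK) (mul_nonneg hs (mul_nonneg hs hs))
  calc frobNorm (deltaZP X E WQ WK P ηQ ηK)
      ≤ ηQ * (s * s) * frobNorm M1 + ηK * (s * s) * frobNorm M2
        + ηQ * ηK * (s * (s * s)) * frobNorm M3 := tri
    _ ≤ ηQ * (s * s) * (oXP ^ 2 * (fXP * oE * fX * oK ^ 2))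
        + ηK * (s * s) * (oXP ^ 2 * (fXP * oE * fX * oQ ^ 2))
        + ηQ * ηK * (s * (s * s)) * (oXP ^ 2 * (fXP ^ 2 * oE ^ 2 * fK * fQ)) := by
        refine add_le_add (add_le_add ?_ ?_) ?_
        · exact mul_le_mul_of_nonneg_left hB1 c1nn
        · exact mul_le_mul_of_nonneg_left hB2 c2nn
        · exact mul_le_mul_of_nonneg_left hB3 c3nn
    _ = oE * fX / (dk : ℝ) * (ηQ * oK ^ 2 + ηK * oQ ^ 2) * oXP ^ 2 * fXP
        + ηQ * ηK * oXP ^ 2 * fXP ^ 2 * oE ^ 2 * fK * fQ / ((dk : ℝ) ^ ((3 : ℝ) / 2)) := by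
        rw [hs3, hs2]
        field_simp
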